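/- arXiv:2403.18113 — 7 statements merged into one kernel-verified Lean document; each statement's English description precedes it below -/
import Mathlib

section
/- Let M be a bounded convex subset of a normed space E and T : M → M a λ-contraction with λ ∈ (0,1). Then there exists a sequence (x_n) in M such that for all n ≥ 1, ‖x_n − T x_n‖ < ((1−λ)/n)(1 + diam M), and for all n, m ≥ 1, ‖x_n − x_m‖ ≤ (1/n + 1/m)(1 + diam M). -/
theorem stmt_2 {E : Type*} [NormedAddCommGroup E] [NormedSpace ℝ E]
    (M : Set E) (hne : M.Nonempty) (hconv : Convex ℝ M)
    (hbdd : Bornology.IsBounded M)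
    (T : E → E) (hmaps : Set.MapsTo T M M)
    (lam : ℝ) (hlam0 : 0 < lam) (hlam1 : lam < 1)
    (hlip : ∀ x ∈ M, ∀ y ∈ M, ‖T x - T y‖ ≤ lam * ‖x - y‖) :
    ∃ x : ℕ → E, (∀ n, x n ∈ M) ∧
      (∀ n : ℕ, 1 ≤ n →
        ‖x n - T (x n)‖ < ((1 - lam) / n) * (1 + Metric.diam M)) ∧
      (∀ n m : ℕ, 1 ≤ n → 1 ≤ m →
        ‖x n - x m‖ ≤ (1 / (n : ℝ) + 1 / (m : ℝ)) * (1 + Metric.diam M)) := by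
  set D := Metric.diam M with hDdef
  have hD : 0 ≤ D := Metric.diam_nonneg
  have hnorm : ∀ x ∈ M, ∀ y ∈ M, ‖x - y‖ ≤ D := fun x hx y hy => by
    rw [← dist_eq_norm]; exact Metric.dist_le_diam_of_mem hbdd hx hy
  obtain ⟨x0, hx0⟩ := hne
  have hiter_mem : ∀ k, T^[k] x0 ∈ M := fun k => Set.MapsTo.iterate hmaps k hx0
  have hiter : ∀ k, ‖T^[k] x0 - T (T^[k] x0)‖ ≤ lam ^ k * D := by
    intro k
    induction k with
    | zero => simpa using hnorm x0 hx0 (T x0) (hmaps hx0)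
    | succ k ih =>
      rw [Function.iterate_succ_apply']
      calc ‖T (T^[k] x0) - T (T (T^[k] x0))‖
          ≤ lam * ‖T^[k] x0 - T (T^[k] x0)‖ :=
            hlip _ (hiter_mem k) _ (hmaps (hiter_mem k))
        _ ≤ lam * (lam ^ k * D) := by nlinarith
        _ = lam ^ (k + 1) * D := by ring
  have key : ∀ ε : ℝ, 0 < ε → ∃ x ∈ M, ‖x - T x‖ < ε := by
    intro ε hε
    have hD1 : (0:ℝ) < D + 1 := by linarith
    obtain ⟨k, hk⟩ := exists_pow_lt_of_lt_one (div_pos hε hD1) hlam1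
    have hk' : lam ^ k * (D + 1) < ε := (lt_div_iff₀ hD1).mp hk
    have hpow : (0:ℝ) ≤ lam ^ k := pow_nonneg hlam0.le k
    exact ⟨T^[k] x0, hiter_mem k, lt_of_le_of_lt (hiter k) (by nlinarith)⟩
  have hch : ∀ n : ℕ, ∃ x, x ∈ M ∧
      ‖x - T x‖ < (1 - lam) / ((max n 1 : ℕ) : ℝ) * (1 + D) := by
    intro n
    have h1 : (0:ℝ) < ((max n 1 : ℕ) : ℝ) := by
      exact_mod_cast Nat.lt_of_lt_of_le Nat.zero_lt_one (le_max_right n 1)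
    exact key _ (mul_pos (div_pos (by linarith) h1) (by linarith))
  choose x hxM hxlt using hch
  have hfix : ∀ n : ℕ, 1 ≤ n → ‖x n - T (x n)‖ < (1 - lam) / (n : ℝ) * (1 + D) := by
    intro n hn
    have := hxlt n
    rwa [max_eq_left hn] at this
  refine ⟨x, hxM, hfix, ?_⟩
  intro n m hn hm
  have hn' : (0:ℝ) < n := by exact_mod_cast hn
  have hm' : (0:ℝ) < m := by exact_mod_cast hm
  have h1 : ‖x n - x m‖ ≤ ‖x n - T (x n)‖ + ‖T (x n) - T (x m)‖ + ‖T (x m) - x m‖ := by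
    have e : x n - x m = (x n - T (x n)) + (T (x n) - T (x m)) + (T (x m) - x m) := by abel
    rw [e]; exact norm_add₃_le
  have h2 : ‖T (x n) - T (x m)‖ ≤ lam * ‖x n - x m‖ := hlip _ (hxM n) _ (hxM m)
  have h3 : ‖T (x m) - x m‖ = ‖x m - T (x m)‖ := norm_sub_rev _ _
  have en := hfix n hn
  have em := hfix m hm
  have hsum : ‖x n - T (x n)‖ + ‖x m - T (x m)‖ <
      (1 - lam) * ((1 / (n:ℝ) + 1 / (m:ℝ)) * (1 + D)) := by
    have heq : (1 - lam) / (n:ℝ) * (1 + D) + (1 - lam) / (m:ℝ) * (1 + D)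
        = (1 - lam) * ((1 / (n:ℝ) + 1 / (m:ℝ)) * (1 + D)) := by
      field_simp
    linarith [add_lt_add en em, heq.le, heq.ge]
  have hineq : (1 - lam) * ‖x n - x m‖ <
      (1 - lam) * ((1 / (n:ℝ) + 1 / (m:ℝ)) * (1 + D)) := by nlinarith
  exact le_of_lt ((mul_lt_mul_iff_right₀ (by linarith)).mp hineq)
end

section
/- Let M be a nonempty bounded convex subset of a normed space E and T : M → M nonexpansive. Then there exists a sequence (y_n) in M such that ‖y_n − T y_n‖ ≤ (1 + diam M)/n for all n ≥ 1. In particular, inf { ‖x − T x‖ : x ∈ M } = 0. -/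
theorem stmt_4 {E : Type*} [NormedAddCommGroup E] [NormedSpace ℝ E]
    (M : Set E) (hne : M.Nonempty) (hconv : Convex ℝ M)
    (hbdd : Bornology.IsBounded M)
    (T : E → E) (hmaps : Set.MapsTo T M M)
    (hnonexp : ∀ x ∈ M, ∀ y ∈ M, ‖T x - T y‖ ≤ ‖x - y‖) :
    (∃ y : ℕ → E, (∀ n, y n ∈ M) ∧
      ∀ n : ℕ, 1 ≤ n → ‖y n - T (y n)‖ ≤ (1 + Metric.diam M) / n) ∧
    sInf ((fun x => ‖x - T x‖) '' M) = 0 := by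
  obtain ⟨x₀, hx₀⟩ := hne
  set d := Metric.diam M with hd
  have hd0 : 0 ≤ d := Metric.diam_nonneg
  have hdist : ∀ a ∈ M, ∀ b ∈ M, ‖a - b‖ ≤ d := by
    intro a ha b hb
    have := Metric.dist_le_diam_of_mem hbdd ha hb
    simpa [dist_eq_norm] using this
  have key : ∀ n : ℕ, 1 ≤ n → ∃ y ∈ M, ‖y - T y‖ ≤ (1 + d) / n := by
    intro n hn
    have hnpos : (0:ℝ) < n := by exact_mod_cast hn
    have hninv : (0:ℝ) < (n:ℝ)⁻¹ := inv_pos.mpr hnpos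
    have hninv1 : (n:ℝ)⁻¹ ≤ 1 := by
      rw [inv_le_one_iff₀]; right; exact_mod_cast hn
    set c : ℝ := 1 - (n:ℝ)⁻¹ with hc
    have hc0 : 0 ≤ c := by rw [hc]; linarith
    have hc1 : c < 1 := by rw [hc]; linarith
    set S : E → E := fun x => (n:ℝ)⁻¹ • x₀ + c • T x with hS
    have hSmem : ∀ x ∈ M, S x ∈ M := by
      intro x hx
      exact hconv hx₀ (hmaps hx) (le_of_lt hninv) hc0 (by rw [hc]; ring)
    have hSlip : ∀ a ∈ M, ∀ b ∈ M, ‖S a - S b‖ ≤ c * ‖a - b‖ := by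
      intro a ha b hb
      have h : S a - S b = c • (T a - T b) := by simp only [hS, smul_sub]; abel
      rw [h, norm_smul, Real.norm_eq_abs, abs_of_nonneg hc0]
      exact mul_le_mul_of_nonneg_left (hnonexp a ha b hb) hc0
    set z : ℕ → E := fun k => S^[k] x₀ with hz
    have hzmem : ∀ k, z k ∈ M := by
      intro k
      induction k with
      | zero => simpa [hz] using hx₀
      | succ k ih =>
        have h : z (k+1) = S (z k) := by
          simp [hz, Function.iterate_succ_apply']
        rw [h]; exact hSmem _ ih
    have hzsucc : ∀ k, z (k+1) = S (z k) := by
      intro k; simp [hz, Function.iterate_succ_apply']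
    have hbound : ∀ k, ‖z k - S (z k)‖ ≤ c ^ k * d := by
      intro k
      induction k with
      | zero =>
        have hz0 : z 0 = x₀ := by simp [hz]
        rw [hz0]
        simpa using hdist x₀ hx₀ (S x₀) (hSmem x₀ hx₀)
      | succ k ih =>
        rw [hzsucc k]
        calc ‖S (z k) - S (S (z k))‖ ≤ c * ‖z k - S (z k)‖ :=
              hSlip _ (hzmem k) _ (hSmem _ (hzmem k))
          _ ≤ c * (c ^ k * d) := mul_le_mul_of_nonneg_left ih hc0
          _ = c ^ (k+1) * d := by ring
    have htend : Filter.Tendsto (fun k : ℕ => c ^ k * d) Filter.atTop (nhds 0) := by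
      have := tendsto_pow_atTop_nhds_zero_of_lt_one hc0 hc1
      simpa using this.mul_const d
    obtain ⟨k, hk⟩ := (htend.eventually_lt_const hninv).exists
    refine ⟨z k, hzmem k, ?_⟩
    have hSTy : S (z k) - T (z k) = (n:ℝ)⁻¹ • (x₀ - T (z k)) := by
      simp only [hS, hc, smul_sub, sub_smul, one_smul]
      abel
    have h2 : ‖S (z k) - T (z k)‖ ≤ (n:ℝ)⁻¹ * d := by
      rw [hSTy, norm_smul, Real.norm_eq_abs, abs_of_pos hninv]
      exact mul_le_mul_of_nonneg_left
        (hdist x₀ hx₀ (T (z k)) (hmaps (hzmem k))) (le_of_lt hninv)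
    have h1 : ‖z k - S (z k)‖ ≤ (n:ℝ)⁻¹ := le_of_lt (lt_of_le_of_lt (hbound k) hk)
    calc ‖z k - T (z k)‖ = ‖(z k - S (z k)) + (S (z k) - T (z k))‖ := by rw [sub_add_sub_cancel]
      _ ≤ ‖z k - S (z k)‖ + ‖S (z k) - T (z k)‖ := norm_add_le _ _
      _ ≤ (n:ℝ)⁻¹ + (n:ℝ)⁻¹ * d := add_le_add h1 h2
      _ = (1 + d) / n := by field_simp
  choose! y hyM hyb using key
  have hy0 : ∀ n, (if 1 ≤ n then y n else x₀) ∈ M := by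
    intro n; split
    · exact hyM n ‹_›
    · exact hx₀
  refine ⟨⟨fun n => if 1 ≤ n then y n else x₀, hy0, ?_⟩, ?_⟩
  · intro n hn; simp only [if_pos hn]; exact hyb n hn
  · have hbdd' : BddBelow ((fun x => ‖x - T x‖) '' M) := by
      refine ⟨0, ?_⟩; rintro r ⟨x, hx, rfl⟩; exact norm_nonneg _
    have hle : ∀ n : ℕ, 1 ≤ n → sInf ((fun x => ‖x - T x‖) '' M) ≤ (1 + d) / n := by
      intro n hn
      exact le_trans (csInf_le hbdd' ⟨y n, hyM n hn, rfl⟩) (hyb n hn)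
    have h0 : 0 ≤ sInf ((fun x => ‖x - T x‖) '' M) :=
      Real.sInf_nonneg (by rintro r ⟨x, hx, rfl⟩; exact norm_nonneg _)
    have htend : Filter.Tendsto (fun n : ℕ => (1 + d) / n) Filter.atTop (nhds 0) :=
      tendsto_const_div_atTop_nhds_zero_nat (1 + d)
    have hle0 : sInf ((fun x => ‖x - T x‖) '' M) ≤ 0 := by
      refine ge_of_tendsto htend ?_
      filter_upwards [Filter.eventually_ge_atTop 1] with n hn using hle n hn
    linarith
end

section
/- The function φ : [0,1] → [0,1] defined by φ(t) = max(t, 1/2) satisfies: for every n ∈ ℕ, every sequence (t_i) in [0,1], every s ∈ [0,1], and every i, sup_{A ⊆ {1,…,n}} |∑_{k∈A} (φ(t_{i+k}) − φ(s))| ≤ sup_{A ⊆ {1,…,n}} |∑_{k∈A} (t_{i+k} − s)|. Consequently φ is 𝔠𝔪-nonexpansive on [0,1]. -/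
open Filter

/-- Supremum over all subsets `A ⊆ {1,…,n}` of the absolute value of the
partial sum. -/
noncomputable def supSubsetsAbs (n : ℕ) (g : ℕ → ℝ) : ℝ :=
  ((Finset.Icc 1 n).powerset).sup' (Finset.powerset_nonempty _)
    (fun A => |∑ k ∈ A, g k|)

lemma le_supSubsetsAbs (n : ℕ) (g : ℕ → ℝ) {A : Finset ℕ}
    (hA : A ∈ (Finset.Icc 1 n).powerset) :
    |∑ k ∈ A, g k| ≤ supSubsetsAbs n g :=
  Finset.le_sup' (fun A => |∑ k ∈ A, g k|) hA

lemma supSubsetsAbs_le (n : ℕ) (g : ℕ → ℝ) {c : ℝ}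
    (h : ∀ A ∈ (Finset.Icc 1 n).powerset, |∑ k ∈ A, g k| ≤ c) :
    supSubsetsAbs n g ≤ c :=
  Finset.sup'_le _ _ h

lemma sum_le_supSubsetsAbs (n : ℕ) (a b : ℕ → ℝ)
    (h1 : ∀ k, 0 ≤ a k → 0 ≤ b k ∧ b k ≤ a k)
    (h2 : ∀ k, a k < 0 → a k ≤ b k ∧ b k ≤ 0)
    (A : Finset ℕ) (hA : A ∈ (Finset.Icc 1 n).powerset) :
    ∑ k ∈ A, b k ≤ supSubsetsAbs n a := by
  classical
  set A' := A.filter (fun k => 0 ≤ a k) with hA'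
  have hsub : A' ⊆ A := Finset.filter_subset _ _
  have h1' : ∑ k ∈ A, b k ≤ ∑ k ∈ A', b k := by
    rw [← Finset.sum_filter_add_sum_filter_not A (fun k => 0 ≤ a k)]
    have : ∑ k ∈ A.filter (fun k => ¬ 0 ≤ a k), b k ≤ 0 :=
      Finset.sum_nonpos fun k hk =>
        (h2 k (lt_of_not_ge (Finset.mem_filter.mp hk).2)).2
    linarith
  have h2' : ∑ k ∈ A', b k ≤ ∑ k ∈ A', a k :=
    Finset.sum_le_sum fun k hk => (h1 k (Finset.mem_filter.mp hk).2).2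
  have h3' : ∑ k ∈ A', a k = |∑ k ∈ A', a k| :=
    (abs_of_nonneg (Finset.sum_nonneg fun k hk => (Finset.mem_filter.mp hk).2)).symm
  have h4' : |∑ k ∈ A', a k| ≤ supSubsetsAbs n a :=
    le_supSubsetsAbs n a
      (Finset.mem_powerset.mpr (hsub.trans (Finset.mem_powerset.mp hA)))
  linarith

lemma supSubsetsAbs_neg (n : ℕ) (a : ℕ → ℝ) :
    supSubsetsAbs n (fun k => -a k) = supSubsetsAbs n a := by
  unfold supSubsetsAbs
  refine Finset.sup'_congr _ rfl fun A _ => ?_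
  rw [Finset.sum_neg_distrib, abs_neg]

lemma supSubsetsAbs_mono (n : ℕ) (a b : ℕ → ℝ)
    (h1 : ∀ k, 0 ≤ a k → 0 ≤ b k ∧ b k ≤ a k)
    (h2 : ∀ k, a k ≤ 0 → a k ≤ b k ∧ b k ≤ 0) :
    supSubsetsAbs n b ≤ supSubsetsAbs n a := by
  refine supSubsetsAbs_le n b fun A hA => abs_le.mpr ⟨?_, ?_⟩
  · have := sum_le_supSubsetsAbs n (fun k => -a k) (fun k => -b k)
      (fun k hk => by
        have hk' : 0 ≤ -a k := hk
        have h := h2 k (by linarith)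
        exact ⟨show (0:ℝ) ≤ -b k by linarith [h.2],
               show -b k ≤ -a k by linarith [h.1]⟩)
      (fun k hk => by
        have hk' : -a k < 0 := hk
        have h := h1 k (by linarith)
        exact ⟨show -a k ≤ -b k by linarith [h.2],
               show -b k ≤ (0:ℝ) by linarith [h.1]⟩) A hA
    rw [supSubsetsAbs_neg, Finset.sum_neg_distrib] at this
    linarith
  · exact sum_le_supSubsetsAbs n a b h1 (fun k hk => h2 k hk.le) A hA

lemma phi_props (x y : ℝ) (hxy : x ≤ y) :
    0 ≤ max y (1/2) - max x (1/2) ∧ max y (1/2) - max x (1/2) ≤ y - x := by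
  rcases le_total x (1/2 : ℝ) with hx | hx <;>
    rcases le_total y (1/2 : ℝ) with hy | hy
  · rw [max_eq_right hx, max_eq_right hy]; constructor <;> linarith
  · rw [max_eq_right hx, max_eq_left hy]; constructor <;> linarith
  · rw [max_eq_left hx, max_eq_right hy]; constructor <;> linarith
  · rw [max_eq_left hx, max_eq_left hy]; constructor <;> linarith

theorem stmt_7 (φ : ℝ → ℝ) (hφ : ∀ t : ℝ, φ t = max t (1 / 2)) :
    (∀ n : ℕ, ∀ t : ℕ → ℝ, (∀ i, t i ∈ Set.Icc (0 : ℝ) 1) →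
      ∀ s ∈ Set.Icc (0 : ℝ) 1, ∀ i : ℕ,
        supSubsetsAbs n (fun k => φ (t (i + k)) - φ s) ≤
          supSubsetsAbs n (fun k => t (i + k) - s)) ∧
    (∀ u : ℕ → ℝ, (∀ i, u i ∈ Set.Icc (0 : ℝ) 1) →
      ∀ y ∈ Set.Icc (0 : ℝ) 1, ∀ n : ℕ,
        limsup (fun i => supSubsetsAbs n (fun k => φ (u (i + k)) - φ y)) atTop ≤
          limsup (fun i => supSubsetsAbs n (fun k => u (i + k) - y)) atTop) := by
  have key : ∀ n : ℕ, ∀ t : ℕ → ℝ, ∀ s : ℝ, ∀ i : ℕ,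
      supSubsetsAbs n (fun k => φ (t (i + k)) - φ s) ≤
        supSubsetsAbs n (fun k => t (i + k) - s) := by
    intro n t s i
    apply supSubsetsAbs_mono
    · intro k hk
      have hk' : (0:ℝ) ≤ t (i + k) - s := hk
      have h := phi_props s (t (i + k)) (by linarith)
      rw [hφ, hφ]
      exact ⟨h.1, by linarith [h.2]⟩
    · intro k hk
      have hk' : t (i + k) - s ≤ 0 := hk
      have h := phi_props (t (i + k)) s (by linarith)
      rw [hφ, hφ]
      exact ⟨by linarith [h.2], by linarith [h.1]⟩
  refine ⟨fun n t _ s _ i => key n t s i, ?_⟩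
  intro u hu y hy n
  have hco : IsCoboundedUnder (· ≤ ·)  atTop
      (fun i => supSubsetsAbs n (fun k => φ (u (i + k)) - φ y)) := by
    refine IsBoundedUnder.isCoboundedUnder_le (isBoundedUnder_of ⟨0, fun i => ?_⟩)
    have h := le_supSubsetsAbs n (fun k => φ (u (i + k)) - φ y)
      (A := ∅) (by simp)
    simpa using h
  have hbd : IsBoundedUnder (· ≤ ·) atTop
      (fun i => supSubsetsAbs n (fun k => u (i + k) - y)) := by
    refine isBoundedUnder_of ⟨(n : ℝ), fun i => ?_⟩
    refine supSubsetsAbs_le n _ fun A hA => ?_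
    calc |∑ k ∈ A, (u (i + k) - y)| ≤ ∑ k ∈ A, |u (i + k) - y| :=
          Finset.abs_sum_le_sum_abs _ _
      _ ≤ ∑ k ∈ A, 1 := by
          refine Finset.sum_le_sum fun k _ => ?_
          have h1 := hu (i + k)
          simp only [Set.mem_Icc] at h1 hy
          rw [abs_le]
          constructor <;> linarith
      _ = (A.card : ℝ) := by simp
      _ ≤ (n : ℝ) := by
          have h2 : A.card ≤ n := by
            have h3 := Finset.card_le_card (Finset.mem_powerset.mp hA)
            simpa [Nat.card_Icc] using h3
          exact_mod_cast h2
  exact Filter.limsup_le_limsup (Eventually.of_forall fun i => key n u y i) hco hbd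
end

section
/- Key estimate for the max-function: for any n ∈ ℕ, real numbers t_1,…,t_n, s ∈ [0,1], and any A ⊆ {1,…,n}, if ∑_{k∈A}(max(t_k,1/2) − max(s,1/2)) ≥ 0 then ∑_{k∈A}(max(t_k,1/2) − max(s,1/2)) ≤ ∑_{k∈B}(t_k − s), where B = {k ∈ A : t_k ≥ 1/2}. -/
theorem stmt_8 (n : ℕ) (t : ℕ → ℝ) (s : ℝ)
    (ht : ∀ k ∈ Finset.Icc 1 n, t k ∈ Set.Icc (0 : ℝ) 1)
    (hs : s ∈ Set.Icc (0 : ℝ) 1)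
    (A : Finset ℕ) (hA : A ⊆ Finset.Icc 1 n)
    (hpos : 0 ≤ ∑ k ∈ A, (max (t k) (1 / 2) - max s (1 / 2))) :
    ∑ k ∈ A, (max (t k) (1 / 2) - max s (1 / 2)) ≤
      ∑ k ∈ A.filter (fun k => 1 / 2 ≤ t k), (t k - s) := by
  have h1 : ∑ k ∈ A, (max (t k) (1 / 2) - max s (1 / 2)) ≤
      ∑ k ∈ A.filter (fun k => 1 / 2 ≤ t k), (max (t k) (1 / 2) - max s (1 / 2)) := by
    rw [← Finset.sum_filter_add_sum_filter_not A (fun k => 1 / 2 ≤ t k)]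
    have h2 : ∑ k ∈ A.filter (fun k => ¬ (1 / 2 ≤ t k)),
        (max (t k) (1 / 2) - max s (1 / 2)) ≤ 0 := by
      apply Finset.sum_nonpos
      intro k hk
      have hk' := (Finset.mem_filter.mp hk).2
      have : max (t k) (1 / 2) = 1 / 2 := max_eq_right (le_of_not_ge hk')
      rw [this]
      have := le_max_right s (1/2 : ℝ)
      linarith
    linarith
  refine h1.trans (Finset.sum_le_sum fun k hk => ?_)
  have h3 : max (t k) (1 / 2) = t k := max_eq_left (Finset.mem_filter.mp hk).2
  have h4 := le_max_left s (1/2 : ℝ)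
  rw [h3]; linarith
end

section
/- Multiplication-by-primitive estimate in L¹: for u_1,…,u_n, v measurable functions from [0,1] to [0,1], ∫₀¹ |∑_{k=1}^n (u_k(t) − v(t)) · (∫₀ᵗ v(s) ds)| dt ≤ max_{A ⊆ {1,…,n}} ‖∑_{k∈A} (u_k − v)‖₁. -/
open MeasureTheory

/-- The `L¹`-norm on `[0,1]` of a function. -/
noncomputable def L1norm (f : ℝ → ℝ) : ℝ :=
  ∫ t in Set.Icc (0 : ℝ) 1, |f t|

theorem stmt_10 (n : ℕ) (u : ℕ → ℝ → ℝ) (v : ℝ → ℝ)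
    (hu_meas : ∀ k, Measurable (u k)) (hv_meas : Measurable v)
    (hu_mem : ∀ k, ∀ᵐ t ∂(volume.restrict (Set.Icc (0 : ℝ) 1)),
      u k t ∈ Set.Icc (0 : ℝ) 1)
    (hv_mem : ∀ᵐ t ∂(volume.restrict (Set.Icc (0 : ℝ) 1)),
      v t ∈ Set.Icc (0 : ℝ) 1) :
    ∫ t in Set.Icc (0 : ℝ) 1,
        |∑ k ∈ Finset.Icc 1 n, ((u k t - v t) * ∫ s in (0 : ℝ)..t, v s)| ≤
      ((Finset.Icc 1 n).powerset).sup' (Finset.powerset_nonempty _)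
        (fun A => L1norm (fun t => ∑ k ∈ A, (u k t - v t))) := by
  -- the primitive of v stays in [0,1] on [0,1]
  have hw : ∀ t ∈ Set.Icc (0 : ℝ) 1, |∫ s in (0:ℝ)..t, v s| ≤ 1 := by
    intro t ht
    have hsub : Set.Ioc (0:ℝ) t ⊆ Set.Icc (0:ℝ) 1 :=
      Set.Ioc_subset_Icc_self.trans (Set.Icc_subset_Icc le_rfl ht.2)
    have hmono : volume.restrict (Set.Ioc (0:ℝ) t) ≤ volume.restrict (Set.Icc (0:ℝ) 1) :=
      Measure.restrict_mono hsub le_rfl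
    have hv' : ∀ᵐ s ∂(volume.restrict (Set.Ioc (0:ℝ) t)), v s ∈ Set.Icc (0:ℝ) 1 :=
      Filter.Eventually.filter_mono (ae_mono hmono) hv_mem
    rw [intervalIntegral.integral_of_le ht.1]
    have h0 : 0 ≤ ∫ s in Set.Ioc (0:ℝ) t, v s :=
      integral_nonneg_of_ae (hv'.mono fun s hs => hs.1)
    have h1 : (∫ s in Set.Ioc (0:ℝ) t, v s) ≤ ∫ _ in Set.Ioc (0:ℝ) t, (1:ℝ) := by
      refine integral_mono_of_nonneg (hv'.mono fun s hs => hs.1) (integrable_const 1)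
        (hv'.mono fun s hs => hs.2)
    rw [abs_of_nonneg h0]
    calc (∫ s in Set.Ioc (0:ℝ) t, v s) ≤ ∫ _ in Set.Ioc (0:ℝ) t, (1:ℝ) := h1
      _ = t := by
          simp [Real.volume_Ioc, ENNReal.toReal_ofReal (sub_nonneg.2 ht.1), ht.1]
      _ ≤ 1 := ht.2
  -- a.e. bound on u's, collected
  have huall : ∀ᵐ t ∂(volume.restrict (Set.Icc (0 : ℝ) 1)),
      ∀ k ∈ Finset.Icc 1 n, u k t ∈ Set.Icc (0:ℝ) 1 := by
    rw [Filter.eventually_all_finset]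
    exact fun k _ => hu_mem k
  have htmem : ∀ᵐ t ∂(volume.restrict (Set.Icc (0 : ℝ) 1)), t ∈ Set.Icc (0:ℝ) 1 :=
    ae_restrict_mem measurableSet_Icc
  -- integrability of the majorant
  have hBmeas : Measurable fun t => |∑ k ∈ Finset.Icc 1 n, (u k t - v t)| :=
    (Finset.measurable_sum _ fun k _ => (hu_meas k).sub hv_meas).abs
  have hBint : Integrable (fun t => |∑ k ∈ Finset.Icc 1 n, (u k t - v t)|)
      (volume.restrict (Set.Icc (0:ℝ) 1)) := by
    refine Integrable.mono' (integrable_const (n:ℝ)) hBmeas.aestronglyMeasurable ?_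
    filter_upwards [huall, hv_mem] with t hut hvt
    rw [Real.norm_eq_abs, abs_abs]
    calc |∑ k ∈ Finset.Icc 1 n, (u k t - v t)| ≤ ∑ k ∈ Finset.Icc 1 n, |u k t - v t| :=
          Finset.abs_sum_le_sum_abs _ _
      _ ≤ ∑ k ∈ Finset.Icc 1 n, 1 := by
          refine Finset.sum_le_sum fun k hk => ?_
          have h1 := (hut k hk).1; have h2 := (hut k hk).2
          have h3 := hvt.1; have h4 := hvt.2
          rw [abs_sub_le_iff]; constructor <;> linarith
      _ = (n : ℝ) := by simp
  have key : (∫ t in Set.Icc (0 : ℝ) 1,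
        |∑ k ∈ Finset.Icc 1 n, ((u k t - v t) * ∫ s in (0 : ℝ)..t, v s)|) ≤
      ∫ t in Set.Icc (0 : ℝ) 1, |∑ k ∈ Finset.Icc 1 n, (u k t - v t)| := by
    refine integral_mono_of_nonneg (Filter.Eventually.of_forall fun t => abs_nonneg _)
      hBint ?_
    filter_upwards [htmem] with t ht
    rw [← Finset.sum_mul, abs_mul]
    calc |∑ k ∈ Finset.Icc 1 n, (u k t - v t)| * |∫ s in (0:ℝ)..t, v s|
        ≤ |∑ k ∈ Finset.Icc 1 n, (u k t - v t)| * 1 :=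
          mul_le_mul_of_nonneg_left (hw t ht) (abs_nonneg _)
      _ = _ := mul_one _
  refine key.trans ?_
  exact Finset.le_sup' (f := fun A => L1norm (fun t => ∑ k ∈ A, (u k t - v t)))
    (Finset.mem_powerset_self _)
end

section
/- Splitting estimate in L¹: for measurable functions u_1,…,u_n, v : [0,1] → [0,1], ∫₀¹ |∑_{k=1}^n u_k(t) · ∫₀ᵗ (u_k(s) − v(s)) ds| dt ≤ max_{C ⊆ {1,…,n}} ‖∑_{k∈C} (u_k − v)‖₁. -/
open MeasureTheory

/-!
At a fixed time `t` write `F k = ∫₀ᵗ (u k - v)`. Since `0 ≤ u k t ≤ 1`, the sum `∑ₖ u k t * F k`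
lies between the sum of the negative `F k` and the sum of the nonnegative ones. Each of these
is `∫₀ᵗ ∑_{k ∈ C} (u k - v)` for a subset `C`, hence bounded in absolute value by the `L¹`-norm
of `∑_{k ∈ C} (u k - v)` on `[0,1]`. So the integrand is bounded by the maximum, and `[0,1]` has
measure one.
-/

lemma mul_le_ite_nonneg {a x : ℝ} (ha : a ∈ Set.Icc (0 : ℝ) 1) :
    a * x ≤ if 0 ≤ x then x else 0 := by
  split_ifs with hx
  · exact mul_le_of_le_one_left hx ha.2
  · exact mul_nonpos_of_nonneg_of_nonpos ha.1 (le_of_not_ge hx)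

lemma Finset.sum_mul_le_sum_filter_nonneg {ι : Type*} (s : Finset ι) {a : ι → ℝ} (F : ι → ℝ)
    (ha : ∀ k ∈ s, a k ∈ Set.Icc (0 : ℝ) 1) :
    ∑ k ∈ s, a k * F k ≤ ∑ k ∈ s with 0 ≤ F k, F k := by
  rw [Finset.sum_filter]
  exact Finset.sum_le_sum fun k hk => mul_le_ite_nonneg (ha k hk)

lemma Finset.abs_sum_mul_le_of_forall_subset {ι : Type*} (s : Finset ι) {a F : ι → ℝ} {M : ℝ}
    (ha : ∀ k ∈ s, a k ∈ Set.Icc (0 : ℝ) 1) (hF : ∀ C ⊆ s, |∑ k ∈ C, F k| ≤ M) :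
    |∑ k ∈ s, a k * F k| ≤ M := by
  have hupper : ∑ k ∈ s, a k * F k ≤ M :=
    (s.sum_mul_le_sum_filter_nonneg F ha).trans
      ((le_abs_self _).trans (hF _ (Finset.filter_subset _ s)))
  have hlower : -∑ k ∈ s, a k * F k ≤ M := by
    have h := s.sum_mul_le_sum_filter_nonneg (fun k => -F k) ha
    simp only [mul_neg, Finset.sum_neg_distrib] at h
    exact h.trans ((neg_le_abs _).trans (hF _ (Finset.filter_subset _ s)))
  exact abs_le.2 ⟨by linarith, hupper⟩

lemma integrableOn_of_ae_mem_Icc {α : Type*} [MeasurableSpace α] {μ : Measure α} {s : Set α}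
    {f : α → ℝ} (hs : μ s ≠ ⊤) (hf : Measurable f)
    (hmem : ∀ᵐ x ∂μ.restrict s, f x ∈ Set.Icc (0 : ℝ) 1) :
    IntegrableOn f s μ :=
  Measure.integrableOn_of_bounded hs hf.aestronglyMeasurable (M := 1) <| by
    filter_upwards [hmem] with x hx
    exact abs_le.2 ⟨by linarith [hx.1], hx.2⟩

lemma abs_intervalIntegral_le_L1norm {g : ℝ → ℝ} (hg : IntegrableOn g (Set.Icc 0 1))
    {t : ℝ} (ht : t ∈ Set.Icc (0 : ℝ) 1) :
    |∫ s in (0 : ℝ)..t, g s| ≤ L1norm g :=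
  calc |∫ s in (0 : ℝ)..t, g s| ≤ ∫ s in (0 : ℝ)..t, |g s| :=
        intervalIntegral.abs_integral_le_integral_abs ht.1
    _ ≤ ∫ s in Set.Icc (0 : ℝ) 1, |g s| := by
        rw [intervalIntegral.integral_of_le ht.1]
        exact setIntegral_mono_set hg.abs (.of_forall fun _ => abs_nonneg _)
          (Set.Ioc_subset_Icc_self.trans (Set.Icc_subset_Icc le_rfl ht.2)).eventuallyLE

lemma setIntegral_Icc_zero_one_le_of_ae_le {f : ℝ → ℝ} {M : ℝ}
    (hf : ∀ᵐ t ∂volume.restrict (Set.Icc (0 : ℝ) 1), |f t| ≤ M) :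
    ∫ t in Set.Icc (0 : ℝ) 1, f t ≤ M := by
  have h := norm_setIntegral_le_of_norm_le_const_ae (f := f) measure_Icc_lt_top hf
  rw [Real.volume_real_Icc_of_le zero_le_one, sub_zero, mul_one] at h
  exact (le_abs_self _).trans h

theorem stmt_11 (n : ℕ) (u : ℕ → ℝ → ℝ) (v : ℝ → ℝ)
    (hu_meas : ∀ k, Measurable (u k)) (hv_meas : Measurable v)
    (hu_mem : ∀ k, ∀ᵐ t ∂(volume.restrict (Set.Icc (0 : ℝ) 1)),
      u k t ∈ Set.Icc (0 : ℝ) 1)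
    (hv_mem : ∀ᵐ t ∂(volume.restrict (Set.Icc (0 : ℝ) 1)),
      v t ∈ Set.Icc (0 : ℝ) 1) :
    ∫ t in Set.Icc (0 : ℝ) 1,
        |∑ k ∈ Finset.Icc 1 n, (u k t * ∫ s in (0 : ℝ)..t, (u k s - v s))| ≤
      ((Finset.Icc 1 n).powerset).sup' (Finset.powerset_nonempty _)
        (fun C => L1norm (fun t => ∑ k ∈ C, (u k t - v t))) := by
  have hint : ∀ k, IntegrableOn (fun t => u k t - v t) (Set.Icc 0 1) := fun k =>
    (integrableOn_of_ae_mem_Icc measure_Icc_lt_top.ne (hu_meas k) (hu_mem k)).sub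
      (integrableOn_of_ae_mem_Icc measure_Icc_lt_top.ne hv_meas hv_mem)
  apply setIntegral_Icc_zero_one_le_of_ae_le
  filter_upwards [ae_restrict_mem measurableSet_Icc, ae_all_iff.2 hu_mem] with t ht hut
  rw [abs_abs]
  refine (Finset.Icc 1 n).abs_sum_mul_le_of_forall_subset (fun k _ => hut k) fun C hC => ?_
  have hsum : ∑ k ∈ C, ∫ s in (0 : ℝ)..t, (u k s - v s)
      = ∫ s in (0 : ℝ)..t, ∑ k ∈ C, (u k s - v s) := by
    refine (intervalIntegral.integral_finsetSum fun k _ => ?_).symm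
    refine ((hint k).mono_set ?_).intervalIntegrable
    rw [Set.uIcc_of_le ht.1]
    exact Set.Icc_subset_Icc le_rfl ht.2
  rw [hsum]
  exact (abs_intervalIntegral_le_L1norm (integrable_finsetSum C fun k _ => hint k) ht).trans
    (Finset.le_sup' (fun C => L1norm fun t => ∑ k ∈ C, (u k t - v t))
      (Finset.mem_powerset.2 hC))
end

section
/- Let X be a Banach space, (P_n) a sequence of continuous finite-rank linear operators on X with sup_n ‖P_n‖ ≤ λ and P_n z → z for every z in a closed subspace F, and let (x_n) be a weakly null sequence in F. Then there exist a subsequence (x_{n_i}) and indices m_1 < m_2 < … such that ‖P_{m_i}(x_{n_j})‖ ≤ 2^{−(i+1)} for all j > i, and ‖x_{n_i} − P_{m_i}(x_{n_i})‖ ≤ 2^{−(i+1)} for all i. -/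
/-!
A finite-rank operator `T` is weak-to-norm sequentially continuous: composing `T` with the
coordinate functionals of a basis of its range gives finitely many functionals, each of which
tends to zero along a weakly null sequence. Hence `P m (x n) → 0` as `n → ∞` for each fixed `m`,
while `P m (x n) → x n` as `m → ∞` for each fixed `n` because `x n ∈ F`. Alternately choosing
`n_i` far enough out for the earlier `m`'s and then `m_i` far enough out for `x (n_i)` yields the
two sequences.
-/

open Filter Topology

section WeaklyNull

variable {𝕜 : Type*} [NontriviallyNormedField 𝕜] [CompleteSpace 𝕜] {ι : Type*} {l : Filter ι}

theorem FiniteDimensional.tendsto_zero_of_forall_dual_tendsto_zero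
    {V : Type*} [AddCommGroup V] [Module 𝕜 V] [TopologicalSpace V] [IsTopologicalAddGroup V]
    [ContinuousSMul 𝕜 V] [T2Space V] [FiniteDimensional 𝕜 V] {y : ι → V}
    (hy : ∀ g : V →L[𝕜] 𝕜, Tendsto (fun i => g (y i)) l (𝓝 0)) :
    Tendsto y l (𝓝 0) := by
  let e := (Module.finBasis 𝕜 V).equivFunL
  have he : Tendsto (fun i => e (y i)) l (𝓝 0) :=
    tendsto_pi_nhds.2 fun k => by
      simpa using hy (ContinuousLinearMap.proj k ∘L e.toContinuousLinearMap)
  simpa [Function.comp_def] using (e.symm.continuous.tendsto 0).comp he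

theorem ContinuousLinearMap.tendsto_zero_of_finiteDimensional_range
    {E F : Type*} [AddCommGroup E] [Module 𝕜 E] [TopologicalSpace E]
    [AddCommGroup F] [Module 𝕜 F] [TopologicalSpace F] [IsTopologicalAddGroup F]
    [ContinuousSMul 𝕜 F] [T2Space F]
    (T : E →L[𝕜] F) [FiniteDimensional 𝕜 (LinearMap.range (T : E →ₗ[𝕜] F))] {x : ι → E}
    (hx : ∀ f : E →L[𝕜] 𝕜, Tendsto (fun i => f (x i)) l (𝓝 0)) :
    Tendsto (fun i => T (x i)) l (𝓝 0) := by
  let Q : E →L[𝕜] LinearMap.range (T : E →ₗ[𝕜] F) :=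
    T.codRestrict _ fun y => LinearMap.mem_range_self _ y
  have hQ : Tendsto (fun i => Q (x i)) l (𝓝 0) :=
    FiniteDimensional.tendsto_zero_of_forall_dual_tendsto_zero fun g => hx (g ∘L Q)
  exact (continuous_subtype_val.tendsto 0).comp hQ

end WeaklyNull

theorem exists_strictMono_interlaced_of_eventually (R S : ℕ → ℕ → ℕ → Prop)
    (hR : ∀ i m, ∀ᶠ n in atTop, R i m n) (hS : ∀ i n, ∀ᶠ m in atTop, S i n m) :
    ∃ nseq mseq : ℕ → ℕ, StrictMono nseq ∧ StrictMono mseq ∧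
      (∀ i j, i < j → R i (mseq i) (nseq j)) ∧ ∀ i, S i (nseq i) (mseq i) := by
  -- Asking `R` for all `m ≤ M` instead of only the earlier `m_i` lets the recursion carry just
  -- the last pair `(n, m)`, since `mseq` is increasing.
  have hnext_n : ∀ j M N, ∃ n, N < n ∧ ∀ i ≤ j, ∀ m ≤ M, R i m n := fun j M N =>
    (((Set.finite_le_nat j).eventually_all.2 fun i _ =>
      (Set.finite_le_nat M).eventually_all.2 fun m _ => hR i m).and
        (eventually_gt_atTop N)).exists.imp fun _ h => ⟨h.2, h.1⟩
  have hnext_m : ∀ i n M, ∃ m, M < m ∧ S i n m := fun i n M =>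
    ((eventually_gt_atTop M).and (hS i n)).exists
  choose fn hfn_gt hfn using hnext_n
  choose fm hfm_gt hfm using hnext_m
  let s : ℕ → ℕ × ℕ := fun k => Nat.rec (0, fm 0 0 0)
    (fun j p => (fn j p.2 p.1, fm (j + 1) (fn j p.2 p.1) p.2)) k
  have hn_mono : StrictMono fun k => (s k).1 :=
    strictMono_nat_of_lt_succ fun j => hfn_gt j (s j).2 (s j).1
  have hm_mono : StrictMono fun k => (s k).2 :=
    strictMono_nat_of_lt_succ fun j => hfm_gt (j + 1) _ (s j).2
  refine ⟨_, _, hn_mono, hm_mono, fun i j hij => ?_, fun i => ?_⟩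
  · obtain ⟨k, rfl⟩ := Nat.exists_eq_add_one_of_ne_zero (Nat.ne_zero_of_lt hij)
    exact hfn k (s k).2 (s k).1 i (Nat.le_of_lt_succ hij) _
      (hm_mono.monotone (Nat.le_of_lt_succ hij))
  · cases i with
    | zero => exact hfm 0 0 0
    | succ j => exact hfm (j + 1) _ (s j).2

theorem stmt_16_general {X : Type*} [NormedAddCommGroup X] [NormedSpace ℝ X]
    (P : ℕ → X →L[ℝ] X)
    (hfr : ∀ n, FiniteDimensional ℝ (LinearMap.range (P n : X →ₗ[ℝ] X)))
    (F : Submodule ℝ X)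
    (happrox : ∀ z ∈ F, Tendsto (fun n => P n z) atTop (nhds z))
    (x : ℕ → X) (hxF : ∀ n, x n ∈ F)
    (hweak : ∀ f : X →L[ℝ] ℝ, Tendsto (fun n => f (x n)) atTop (nhds 0)) :
    ∃ nseq mseq : ℕ → ℕ, StrictMono nseq ∧ StrictMono mseq ∧
      (∀ i j : ℕ, i < j →
        ‖P (mseq i) (x (nseq j))‖ ≤ (1 / 2 : ℝ) ^ (i + 1)) ∧
      (∀ i : ℕ, ‖x (nseq i) - P (mseq i) (x (nseq i))‖ ≤ (1 / 2 : ℝ) ^ (i + 1)) := by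
  have hε : ∀ i : ℕ, Metric.closedBall (0 : X) ((1 / 2 : ℝ) ^ (i + 1)) ∈ 𝓝 0 := fun i =>
    Metric.closedBall_mem_nhds 0 (by positivity)
  have hP_null : ∀ m, Tendsto (fun n => P m (x n)) atTop (𝓝 0) := fun m =>
    haveI := hfr m
    (P m).tendsto_zero_of_finiteDimensional_range hweak
  have hP_approx : ∀ n, Tendsto (fun m => x n - P m (x n)) atTop (𝓝 0) := fun n => by
    simpa using (tendsto_const_nhds (x := x n)).sub (happrox _ (hxF n))
  exact exists_strictMono_interlaced_of_eventually
    (fun i m n => ‖P m (x n)‖ ≤ (1 / 2 : ℝ) ^ (i + 1))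
    (fun i n m => ‖x n - P m (x n)‖ ≤ (1 / 2 : ℝ) ^ (i + 1))
    (fun i m => (hP_null m).eventually (hε i) |>.mono fun _ => mem_closedBall_zero_iff.1)
    (fun i n => (hP_approx n).eventually (hε i) |>.mono fun _ => mem_closedBall_zero_iff.1)

theorem stmt_16 {X : Type*} [NormedAddCommGroup X] [NormedSpace ℝ X]
    [CompleteSpace X]
    (P : ℕ → X →L[ℝ] X)
    (hfr : ∀ n, FiniteDimensional ℝ (LinearMap.range (P n : X →ₗ[ℝ] X)))
    (lam : ℝ) (hlam : ∀ n, ‖P n‖ ≤ lam)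
    (F : Submodule ℝ X) (hFclosed : IsClosed (F : Set X))
    (happrox : ∀ z ∈ F, Tendsto (fun n => P n z) atTop (nhds z))
    (x : ℕ → X) (hxF : ∀ n, x n ∈ F)
    (hweak : ∀ f : X →L[ℝ] ℝ, Tendsto (fun n => f (x n)) atTop (nhds 0)) :
    ∃ nseq mseq : ℕ → ℕ, StrictMono nseq ∧ StrictMono mseq ∧
      (∀ i j : ℕ, i < j →
        ‖P (mseq i) (x (nseq j))‖ ≤ (1 / 2 : ℝ) ^ (i + 1)) ∧
      (∀ i : ℕ, ‖x (nseq i) - P (mseq i) (x (nseq i))‖ ≤ (1 / 2 : ℝ) ^ (i + 1)) :=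
  stmt_16_general P hfr F happrox x hxF hweak
end
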